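/- (Corollary 1.) Suppose the final reward ρ_T : Δ(S) → ℝ is convex on Δ(S) and, for every t ∈ {0, …, T−1} and every a ∈ A, the reward b ↦ ρ_t(b, a) is convex on Δ(S). Then for every t ∈ {0, …, T−1}, every node q ∈ Q_t, every finite index set J, every probability weight vector (g_j)_{j∈J} (g_j ≥ 0, Σ_j g_j = 1), and every family of beliefs (b_j)_{j∈J} in Δ(S), one has Σ_{j∈J} g_j · V_t(b_j, q) ≥ V_t( Σ_{j∈J} g_j · b_j, q ), where the convex combination Σ_j g_j · b_j lies in Δ(S). -/

import Mathlib

/-!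
Each value function `V t · q` is convex on the simplex, by backward induction on `t`. The
Bellman term `b ↦ ∑ z, η(b, z) * F z (ζ(b, z))` preserves convexity because `η(·, z)` and
the unnormalized posterior `η(·, z) • ζ(·, z)` are both linear in `b`, so each summand is the
perspective of the convex function `F z` composed with linear maps. Jensen's inequality for
the convex function `V t · q` is then the claim.
-/

/-- The standard probability simplex Δ(S) of beliefs over a finite state set `S`. -/
def simplex (S : Type*) [Fintype S] : Set (S → ℝ) :=
  {b | (∀ s, 0 ≤ b s) ∧ ∑ s, b s = 1}

/-- Observation likelihood `η(b, z)` for transition kernel `Ps` and observation kernel `Pz`. -/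
noncomputable def eta {S Z : Type*} [Fintype S] (Ps : S → S → ℝ) (Pz : S → Z → ℝ)
    (b : S → ℝ) (z : Z) : ℝ :=
  ∑ s', Pz s' z * ∑ s, Ps s s' * b s

/-- Bayes posterior `ζ(b, z)` for transition kernel `Ps` and observation kernel `Pz`. -/
noncomputable def zeta {S Z : Type*} [Fintype S] (Ps : S → S → ℝ) (Pz : S → Z → ℝ)
    (b : S → ℝ) (z : Z) : S → ℝ :=
  fun s' => Pz s' z * (∑ s, Ps s s' * b s) / eta Ps Pz b z

theorem convex_simplex (S : Type*) [Fintype S] : Convex ℝ (simplex S) :=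
  convex_stdSimplex ℝ S

theorem ConvexOn.sum {𝕜 E β ι : Type*} [Semiring 𝕜] [PartialOrder 𝕜] [AddCommMonoid E]
    [AddCommMonoid β] [PartialOrder β] [IsOrderedAddMonoid β] [SMul 𝕜 E] [Module 𝕜 β]
    {s : Set E} (hs : Convex 𝕜 s) (t : Finset ι) {f : ι → E → β}
    (hf : ∀ i ∈ t, ConvexOn 𝕜 s (f i)) : ConvexOn 𝕜 s (fun x => ∑ i ∈ t, f i x) := by
  classical
  induction t using Finset.induction_on with
  | empty => simpa using convexOn_const (0 : β) hs
  | insert i t hi ih =>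
    simp only [Finset.sum_insert hi]
    exact (hf i (t.mem_insert_self i)).add
      (ih fun j hj => hf j (Finset.mem_insert_of_mem hj))

theorem ConvexOn.perspective {E F : Type*} [AddCommGroup E] [Module ℝ E] [AddCommGroup F]
    [Module ℝ F] {C : Set F} {D : Set E} {f : F → ℝ} (hf : ConvexOn ℝ C f) (hD : Convex ℝ D)
    (L : E →ₗ[ℝ] ℝ) (M : E →ₗ[ℝ] F) (hL : ∀ x ∈ D, 0 < L x)
    (hM : ∀ x ∈ D, (L x)⁻¹ • M x ∈ C) :
    ConvexOn ℝ D (fun x => L x * f ((L x)⁻¹ • M x)) := by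
  refine ⟨hD, fun x hx y hy a b ha hb hab => ?_⟩
  set w := L (a • x + b • y)
  have hw : 0 < w := hL _ (hD hx hy ha hb hab)
  have hw_eq : w = a * L x + b * L y := by simp [w]
  have hLx := hL x hx
  have hLy := hL y hy
  have hcomb : w⁻¹ • M (a • x + b • y) =
      (a * L x / w) • ((L x)⁻¹ • M x) + (b * L y / w) • ((L y)⁻¹ • M y) := by
    simp only [map_add, map_smul, smul_add, smul_smul]
    congr 2 <;> field_simp
  have hjensen := hf.2 (hM x hx) (hM y hy) (by positivity : 0 ≤ a * L x / w)
    (by positivity : 0 ≤ b * L y / w) (by rw [← add_div, ← hw_eq, div_self hw.ne'])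
  rw [← hcomb] at hjensen
  calc w * f (w⁻¹ • M (a • x + b • y))
      ≤ w * ((a * L x / w) * f ((L x)⁻¹ • M x) + (b * L y / w) * f ((L y)⁻¹ • M y)) :=
        mul_le_mul_of_nonneg_left hjensen hw.le
    _ = a • (L x * f ((L x)⁻¹ • M x)) + b • (L y * f ((L y)⁻¹ • M y)) := by
        simp only [smul_eq_mul]
        field_simp

theorem sum_mul_pos_of_mem_simplex {S : Type*} [Fintype S] {p f : S → ℝ} (hp : p ∈ simplex S)
    (hf : ∀ s, 0 < f s) : 0 < ∑ s, f s * p s := by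
  obtain ⟨s, -, hs⟩ := Finset.exists_ne_zero_of_sum_ne_zero (hp.2.symm ▸ one_ne_zero)
  exact Finset.sum_pos' (fun s _ => mul_nonneg (hf s).le (hp.1 s))
    ⟨s, Finset.mem_univ s, mul_pos (hf s) ((hp.1 s).lt_of_ne' hs)⟩

section BayesUpdate

variable {S Z : Type*} [Fintype S] (Ps : S → S → ℝ) (Pz : S → Z → ℝ)

theorem predict_mem_simplex (hPs0 : ∀ s s', 0 ≤ Ps s s') (hPs1 : ∀ s, ∑ s', Ps s s' = 1)
    {b : S → ℝ} (hb : b ∈ simplex S) : (fun s' => ∑ s, Ps s s' * b s) ∈ simplex S := by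
  refine ⟨fun s' => Finset.sum_nonneg fun s _ => mul_nonneg (hPs0 s s') (hb.1 s), ?_⟩
  simp only [Finset.sum_comm (γ := S) (f := fun s' s => Ps s s' * b s), ← Finset.sum_mul, hPs1,
    one_mul, hb.2]

theorem eta_pos (hPs0 : ∀ s s', 0 ≤ Ps s s') (hPs1 : ∀ s, ∑ s', Ps s s' = 1)
    (hPz0 : ∀ s' z, 0 < Pz s' z) {b : S → ℝ} (hb : b ∈ simplex S) (z : Z) :
    0 < eta Ps Pz b z :=
  sum_mul_pos_of_mem_simplex (predict_mem_simplex Ps hPs0 hPs1 hb) (hPz0 · z)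

theorem zeta_mem_simplex (hPs0 : ∀ s s', 0 ≤ Ps s s') (hPs1 : ∀ s, ∑ s', Ps s s' = 1)
    (hPz0 : ∀ s' z, 0 < Pz s' z) {b : S → ℝ} (hb : b ∈ simplex S) (z : Z) :
    zeta Ps Pz b z ∈ simplex S := by
  have hη := eta_pos Ps Pz hPs0 hPs1 hPz0 hb z
  refine ⟨fun s' => div_nonneg (mul_nonneg (hPz0 s' z).le
    ((predict_mem_simplex Ps hPs0 hPs1 hb).1 s')) hη.le, ?_⟩
  simp only [zeta, ← Finset.sum_div]
  exact div_self hη.ne'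

def posteriorNumerator (z : Z) : (S → ℝ) →ₗ[ℝ] (S → ℝ) where
  toFun b s' := Pz s' z * ∑ s, Ps s s' * b s
  map_add' b c := by
    ext s'
    simp only [Pi.add_apply, mul_add, Finset.sum_add_distrib]
  map_smul' r b := by
    ext s'
    simp only [Pi.smul_apply, smul_eq_mul, RingHom.id_apply, Finset.mul_sum]
    exact Finset.sum_congr rfl fun s _ => by ring

def likelihood (z : Z) : (S → ℝ) →ₗ[ℝ] ℝ :=
  (∑ s', LinearMap.proj s') ∘ₗ posteriorNumerator Ps Pz z

theorem likelihood_apply (z : Z) (b : S → ℝ) : likelihood Ps Pz z b = eta Ps Pz b z := by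
  simp [likelihood, eta, posteriorNumerator]

theorem zeta_eq_inv_smul (b : S → ℝ) (z : Z) :
    zeta Ps Pz b z = (eta Ps Pz b z)⁻¹ • posteriorNumerator Ps Pz z b := by
  ext s'
  simp [zeta, posteriorNumerator, div_eq_inv_mul]

end BayesUpdate

theorem convexOn_bellman {S Z : Type*} [Fintype S] [Fintype Z] (Ps : S → S → ℝ)
    (Pz : S → Z → ℝ) (hPs0 : ∀ s s', 0 ≤ Ps s s') (hPs1 : ∀ s, ∑ s', Ps s s' = 1)
    (hPz0 : ∀ s' z, 0 < Pz s' z) {r : (S → ℝ) → ℝ} (hr : ConvexOn ℝ (simplex S) r)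
    {F : Z → (S → ℝ) → ℝ} (hF : ∀ z, ConvexOn ℝ (simplex S) (F z)) :
    ConvexOn ℝ (simplex S) (fun b => r b + ∑ z, eta Ps Pz b z * F z (zeta Ps Pz b z)) := by
  refine hr.add (ConvexOn.sum (convex_simplex S) _ fun z _ => ?_)
  have hpersp := (hF z).perspective (convex_simplex S) (likelihood Ps Pz z)
    (posteriorNumerator Ps Pz z)
    (fun b hb => by rw [likelihood_apply]; exact eta_pos Ps Pz hPs0 hPs1 hPz0 hb z)
    (fun b hb => by
      rw [likelihood_apply, ← zeta_eq_inv_smul]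
      exact zeta_mem_simplex Ps Pz hPs0 hPs1 hPz0 hb z)
  simpa only [likelihood_apply, ← zeta_eq_inv_smul] using hpersp

theorem convexOn_value_function
    {S Z A : Type*} [Fintype S] [Fintype Z]
    (Ps : A → S → S → ℝ) (Pz : A → S → Z → ℝ)
    (hPs0 : ∀ a s s', 0 ≤ Ps a s s') (hPs1 : ∀ a s, ∑ s', Ps a s s' = 1)
    (hPz0 : ∀ a s' z, 0 < Pz a s' z) (T : ℕ)
    (Q : ℕ → Type*) (γ : ∀ t, Q t → A) (lam : ∀ t, Q t → Z → Q (t + 1))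
    (ρ : ℕ → (S → ℝ) → A → ℝ) (ρT : (S → ℝ) → ℝ)
    (hρT : ConvexOn ℝ (simplex S) ρT)
    (hρ : ∀ t < T, ∀ a : A, ConvexOn ℝ (simplex S) (fun b => ρ t b a))
    (V : ∀ t, (S → ℝ) → Q t → ℝ)
    (hVlast : ∀ (b : S → ℝ) (q : Q (T - 1)),
      V (T - 1) b q = ρ (T - 1) b (γ (T - 1) q) +
        ∑ z, eta (Ps (γ (T - 1) q)) (Pz (γ (T - 1) q)) b z *
          ρT (zeta (Ps (γ (T - 1) q)) (Pz (γ (T - 1) q)) b z))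
    (hVstep : ∀ t, t < T - 1 → ∀ (b : S → ℝ) (q : Q t),
      V t b q = ρ t b (γ t q) +
        ∑ z, eta (Ps (γ t q)) (Pz (γ t q)) b z *
          V (t + 1) (zeta (Ps (γ t q)) (Pz (γ t q)) b z) (lam t q z))
    {t : ℕ} (ht : t < T) (q : Q t) :
    ConvexOn ℝ (simplex S) (fun b => V t b q) := by
  suffices h : ∀ k t, t + k + 1 = T → ∀ q : Q t, ConvexOn ℝ (simplex S) (fun b => V t b q) from
    h (T - 1 - t) t (by omega) q
  intro k
  induction k with
  | zero =>
    intro t htT q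
    obtain rfl : t = T - 1 := by omega
    simp only [hVlast]
    exact convexOn_bellman _ _ (hPs0 _) (hPs1 _) (hPz0 _) (hρ _ (by omega) _) fun _ => hρT
  | succ k ih =>
    intro t htT q
    simp only [hVstep t (by omega)]
    exact convexOn_bellman _ _ (hPs0 _) (hPs1 _) (hPz0 _) (hρ t (by omega) _)
      fun z => ih (t + 1) (by omega) (lam t q z)

theorem value_function_jensen_lower_bound_general
    {S Z A : Type*} [Fintype S] [Fintype Z]
    (Ps : A → S → S → ℝ) (Pz : A → S → Z → ℝ)
    (hPs0 : ∀ a s s', 0 ≤ Ps a s s') (hPs1 : ∀ a s, ∑ s', Ps a s s' = 1)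
    (hPz0 : ∀ a s' z, 0 < Pz a s' z)
    (T : ℕ)
    (Q : ℕ → Type)
    (γ : ∀ t, Q t → A) (lam : ∀ t, Q t → Z → Q (t + 1))
    (ρ : ℕ → (S → ℝ) → A → ℝ) (ρT : (S → ℝ) → ℝ)
    (hρT : ConvexOn ℝ (simplex S) ρT)
    (hρ : ∀ t < T, ∀ a : A, ConvexOn ℝ (simplex S) (fun b => ρ t b a))
    (V : ∀ t, (S → ℝ) → Q t → ℝ)
    (hVlast : ∀ (b : S → ℝ) (q : Q (T - 1)),
      V (T - 1) b q = ρ (T - 1) b (γ (T - 1) q) +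
        ∑ z, eta (Ps (γ (T - 1) q)) (Pz (γ (T - 1) q)) b z *
          ρT (zeta (Ps (γ (T - 1) q)) (Pz (γ (T - 1) q)) b z))
    (hVstep : ∀ t, t < T - 1 → ∀ (b : S → ℝ) (q : Q t),
      V t b q = ρ t b (γ t q) +
        ∑ z, eta (Ps (γ t q)) (Pz (γ t q)) b z *
          V (t + 1) (zeta (Ps (γ t q)) (Pz (γ t q)) b z) (lam t q z))
    (t : ℕ) (ht : t < T) (q : Q t)
    (J : Type*) [Fintype J] (g : J → ℝ) (bf : J → (S → ℝ))
    (hg0 : ∀ j, 0 ≤ g j) (hg1 : ∑ j, g j = 1)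
    (hbf : ∀ j, bf j ∈ simplex S) :
    (∑ j, g j • bf j) ∈ simplex S ∧
      ∑ j, g j * V t (bf j) q ≥ V t (∑ j, g j • bf j) q := by
  have hV :=
    convexOn_value_function Ps Pz hPs0 hPs1 hPz0 T Q γ lam ρ ρT hρT hρ V hVlast hVstep ht q
  exact ⟨(convex_simplex S).sum_mem (fun j _ => hg0 j) hg1 (fun j _ => hbf j),
    hV.map_sum_le (fun j _ => hg0 j) hg1 (fun j _ => hbf j)⟩

/-- **Corollary 1.** Under convex rewards, the expected value of the value function over a
probability mass function on beliefs is at least the value at the expected belief: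
`∑ j, g j * V t (b j) q ≥ V t (∑ j, g j • b j) q`, and the convex combination is a belief. -/
theorem value_function_jensen_lower_bound
    {S Z A : Type*} [Fintype S] [Fintype Z] [Fintype A]
    [Nonempty S] [Nonempty Z] [Nonempty A]
    (Ps : A → S → S → ℝ) (Pz : A → S → Z → ℝ)
    (hPs0 : ∀ a s s', 0 ≤ Ps a s s') (hPs1 : ∀ a s, ∑ s', Ps a s s' = 1)
    (hPz0 : ∀ a s' z, 0 < Pz a s' z) (hPz1 : ∀ a s', ∑ z, Pz a s' z = 1)
    (T : ℕ) (hT : 1 ≤ T)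
    (Q : ℕ → Type) [∀ t, Nonempty (Q t)]
    (γ : ∀ t, Q t → A) (lam : ∀ t, Q t → Z → Q (t + 1))
    (ρ : ℕ → (S → ℝ) → A → ℝ) (ρT : (S → ℝ) → ℝ)
    (hρT : ConvexOn ℝ (simplex S) ρT)
    (hρ : ∀ t < T, ∀ a : A, ConvexOn ℝ (simplex S) (fun b => ρ t b a))
    (V : ∀ t, (S → ℝ) → Q t → ℝ)
    (hVlast : ∀ (b : S → ℝ) (q : Q (T - 1)),
      V (T - 1) b q = ρ (T - 1) b (γ (T - 1) q) +
        ∑ z, eta (Ps (γ (T - 1) q)) (Pz (γ (T - 1) q)) b z *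
          ρT (zeta (Ps (γ (T - 1) q)) (Pz (γ (T - 1) q)) b z))
    (hVstep : ∀ t, t < T - 1 → ∀ (b : S → ℝ) (q : Q t),
      V t b q = ρ t b (γ t q) +
        ∑ z, eta (Ps (γ t q)) (Pz (γ t q)) b z *
          V (t + 1) (zeta (Ps (γ t q)) (Pz (γ t q)) b z) (lam t q z))
    (t : ℕ) (ht : t < T) (q : Q t)
    (J : Type*) [Fintype J] (g : J → ℝ) (bf : J → (S → ℝ))
    (hg0 : ∀ j, 0 ≤ g j) (hg1 : ∑ j, g j = 1)
    (hbf : ∀ j, bf j ∈ simplex S) :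
    (∑ j, g j • bf j) ∈ simplex S ∧
      ∑ j, g j * V t (bf j) q ≥ V t (∑ j, g j • bf j) q :=
  value_function_jensen_lower_bound_general Ps Pz hPs0 hPs1 hPz0 T Q γ lam ρ ρT hρT hρ V hVlast
    hVstep t ht q J g bf hg0 hg1 hbf
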